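/- Let I₁, I₂ ⊆ ℝ be nonempty open intervals, D = (1/2)(I₁+I₂), and φ : D → ℝ with Z_φ = {u ∈ D : φ(u)=0} closed in D. If φ((x+y)/2)(f₁(x) − f₂(y)) = 0 for all x ∈ I₁, y ∈ I₂, the triplet (φ,f₁,f₂) is not extremal, and neither f₁ nor f₂ is constant, then there exist λ, μ ∈ ℝ, open intervals U₁, U₂ ⊆ I₁ and V₁, V₂ ⊆ I₂ with (inf U₁ = inf I₁ and inf V₁ = inf I₂) or (sup U₂ = sup I₁ and sup V₂ = sup I₂), such that f₁ ≡ λ on U₁, f₂ ≡ λ on V₁ (or f₁ ≡ μ on U₂, f₂ ≡ μ on V₂), and φ vanishes on (1/2)(K₁+I₂) ∪ (1/2)(I₁+K₂), where K₁ = I₁ \ (U₁ ∪ U₂) and K₂ = I₂ \ (V₁ ∪ V₂) are nonempty closed proper subintervals. -/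

import Mathlib

/-- The set `(1/2)(A + B) = {(a+b)/2 : a ∈ A, b ∈ B}`. -/
def halfSum (A B : Set ℝ) : Set ℝ := {u | ∃ a ∈ A, ∃ b ∈ B, u = (a + b) / 2}

/-- The infimum of a set of reals, taken in the extended reals. -/
noncomputable def eInf (A : Set ℝ) : EReal := sInf ((fun x : ℝ => (x : EReal)) '' A)

/-- The supremum of a set of reals, taken in the extended reals. -/
noncomputable def eSup (A : Set ℝ) : EReal := sSup ((fun x : ℝ => (x : EReal)) '' A)

lemma eInf_eq_of {A B : Set ℝ} (hAB : A ⊆ B) (h : ∀ x ∈ B, ∃ z ∈ A, z ≤ x) :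
    sInf ((fun x : ℝ => (x : EReal)) '' A) = sInf ((fun x : ℝ => (x : EReal)) '' B) := by
  apply le_antisymm
  · apply le_sInf
    rintro w ⟨x, hx, rfl⟩
    obtain ⟨z, hz, hzx⟩ := h x hx
    exact le_trans (sInf_le ⟨z, hz, rfl⟩) (EReal.coe_le_coe_iff.mpr hzx)
  · exact sInf_le_sInf (Set.image_mono hAB)

lemma eSup_eq_of {A B : Set ℝ} (hAB : A ⊆ B) (h : ∀ x ∈ B, ∃ z ∈ A, x ≤ z) :
    sSup ((fun x : ℝ => (x : EReal)) '' A) = sSup ((fun x : ℝ => (x : EReal)) '' B) := by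
  apply le_antisymm
  · exact sSup_le_sSup (Set.image_mono hAB)
  · apply sSup_le
    rintro w ⟨x, hx, rfl⟩
    obtain ⟨z, hz, hzx⟩ := h x hx
    exact le_trans (EReal.coe_le_coe_iff.mpr hzx) (le_sSup ⟨z, hz, rfl⟩)

/-- Local constancy + connectedness: `f₁` is constant on `{x ∈ I₁ | 2u - x ∈ I₂}`
when `φ` is nonzero near `u`. -/
lemma aux_Xconst (I₁ I₂ : Set ℝ) (hI₁o : IsOpen I₁) (hI₁c : I₁.OrdConnected)
    (hI₂o : IsOpen I₂) (hI₂c : I₂.OrdConnected)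
    (φ f₁ f₂ : ℝ → ℝ)
    (heq : ∀ x ∈ I₁, ∀ y ∈ I₂, φ ((x + y) / 2) * (f₁ x - f₂ y) = 0)
    (u ε : ℝ) (hε : 0 < ε)
    (hN : ∀ v, |v - u| < ε → φ v ≠ 0)
    (x x' : ℝ) (hx : x ∈ I₁ ∧ 2*u - x ∈ I₂) (hx' : x' ∈ I₁ ∧ 2*u - x' ∈ I₂) :
    f₁ x = f₁ x' := by
  set X : Set ℝ := {z | z ∈ I₁ ∧ 2*u - z ∈ I₂} with hX
  have hXopen : IsOpen X := by
    have : X = I₁ ∩ (fun z : ℝ => 2*u - z) ⁻¹' I₂ := rfl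
    rw [this]
    exact hI₁o.inter (hI₂o.preimage (continuous_const.sub continuous_id))
  have hXord : X.OrdConnected := by
    constructor
    rintro a ⟨ha1, ha2⟩ b ⟨hb1, hb2⟩ z hz
    exact ⟨hI₁c.out ha1 hb1 hz,
      hI₂c.out hb2 ha2 ⟨by simp only [Set.mem_Icc] at hz; linarith [hz.2],
        by simp only [Set.mem_Icc] at hz; linarith [hz.1]⟩⟩
  -- the value f₁ z = f₂ (2u - z) for z ∈ X
  have hpair : ∀ z ∈ X, f₁ z = f₂ (2*u - z) := by
    rintro z ⟨hz1, hz2⟩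
    have h := heq z hz1 (2*u - z) hz2
    have e : (z + (2*u - z))/2 = u := by ring
    rw [e] at h
    rcases mul_eq_zero.mp h with h | h
    · exact absurd h (hN u (by simpa using hε))
    · linarith
  -- local constancy
  have hloc : ∀ z ∈ X, ∀ z' ∈ I₁, |z' - z| < 2*ε → f₁ z' = f₁ z := by
    rintro z hz z' hz' hd
    have h := heq z' hz' (2*u - z) hz.2
    have hnz : φ ((z' + (2*u - z))/2) ≠ 0 := by
      apply hN
      have : (z' + (2*u - z))/2 - u = (z' - z)/2 := by ring
      rw [this, abs_div]
      simp only [abs_two]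
      linarith [hd, abs_nonneg (z' - z)]
    rcases mul_eq_zero.mp h with h | h
    · exact absurd h hnz
    · rw [hpair z hz]; linarith
  -- clopen argument
  by_contra hne
  set G : Set ℝ := {z | z ∈ X ∧ f₁ z = f₁ x} with hG
  set B : Set ℝ := {z | z ∈ X ∧ f₁ z ≠ f₁ x} with hB
  have hGopen : IsOpen G := by
    rw [Metric.isOpen_iff]
    rintro z ⟨hzX, hzv⟩
    obtain ⟨δ, hδ, hball⟩ := Metric.isOpen_iff.mp hXopen z hzX
    refine ⟨min δ (2*ε), lt_min hδ (by linarith), ?_⟩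
    intro w hw
    rw [Metric.mem_ball, Real.dist_eq] at hw
    have hwX : w ∈ X := hball (by rw [Metric.mem_ball, Real.dist_eq]; exact lt_of_lt_of_le hw (min_le_left _ _))
    refine ⟨hwX, ?_⟩
    rw [hloc z hzX w hwX.1 (lt_of_lt_of_le hw (min_le_right _ _))]
    exact hzv
  have hBopen : IsOpen B := by
    rw [Metric.isOpen_iff]
    rintro z ⟨hzX, hzv⟩
    obtain ⟨δ, hδ, hball⟩ := Metric.isOpen_iff.mp hXopen z hzX
    refine ⟨min δ (2*ε), lt_min hδ (by linarith), ?_⟩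
    intro w hw
    rw [Metric.mem_ball, Real.dist_eq] at hw
    have hwX : w ∈ X := hball (by rw [Metric.mem_ball, Real.dist_eq]; exact lt_of_lt_of_le hw (min_le_left _ _))
    refine ⟨hwX, ?_⟩
    rw [hloc z hzX w hwX.1 (lt_of_lt_of_le hw (min_le_right _ _))]
    exact hzv
  have hpre : IsPreconnected X := hXord.isPreconnected
  obtain ⟨z, _, hzG, hzB⟩ := hpre G B hGopen hBopen
    (fun z hz => by by_cases h : f₁ z = f₁ x; exacts [Or.inl ⟨hz, h⟩, Or.inr ⟨hz, h⟩])
    ⟨x, hx, hx, rfl⟩ ⟨x', hx', hx', fun h => hne h.symm⟩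
  exact hzB.2 hzG.2

lemma isOpen_exists_mem {N : Set ℝ} (S : ℝ → Set ℝ) (h : ∀ u, IsOpen (S u)) :
    IsOpen {x : ℝ | ∃ u ∈ N, x ∈ S u} := by
  have : {x : ℝ | ∃ u ∈ N, x ∈ S u} = ⋃ u ∈ N, S u := by
    ext x; simp [Set.mem_iUnion]
  rw [this]
  exact isOpen_biUnion (fun u _ => h u)
theorem structure_of_nonextremal_solutions_nonconstant (I₁ I₂ : Set ℝ)
    (hI₁o : IsOpen I₁) (hI₁c : I₁.OrdConnected) (hI₁n : I₁.Nonempty)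
    (hI₂o : IsOpen I₂) (hI₂c : I₂.OrdConnected) (hI₂n : I₂.Nonempty)
    (φ f₁ f₂ : ℝ → ℝ)
    (hZclosed : closure {u ∈ halfSum I₁ I₂ | φ u = 0} ∩ halfSum I₁ I₂ ⊆
      {u ∈ halfSum I₁ I₂ | φ u = 0})
    (heq : ∀ x ∈ I₁, ∀ y ∈ I₂, φ ((x + y) / 2) * (f₁ x - f₂ y) = 0)
    (hnotext : ¬ ((∀ u ∈ halfSum I₁ I₂, φ u = 0) ∨
      ∃ c : ℝ, (∀ x ∈ I₁, f₁ x = c) ∧ (∀ y ∈ I₂, f₂ y = c)))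
    (hf₁nc : ¬ ∃ c : ℝ, ∀ x ∈ I₁, f₁ x = c)
    (hf₂nc : ¬ ∃ c : ℝ, ∀ y ∈ I₂, f₂ y = c) :
    ∃ (lam mu : ℝ) (U₁ U₂ V₁ V₂ : Set ℝ),
      IsOpen U₁ ∧ U₁.OrdConnected ∧ U₁ ⊆ I₁ ∧
      IsOpen U₂ ∧ U₂.OrdConnected ∧ U₂ ⊆ I₁ ∧
      IsOpen V₁ ∧ V₁.OrdConnected ∧ V₁ ⊆ I₂ ∧
      IsOpen V₂ ∧ V₂.OrdConnected ∧ V₂ ⊆ I₂ ∧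
      ((eInf U₁ = eInf I₁ ∧ eInf V₁ = eInf I₂ ∧
          (∀ x ∈ U₁, f₁ x = lam) ∧ (∀ y ∈ V₁, f₂ y = lam)) ∨
        (eSup U₂ = eSup I₁ ∧ eSup V₂ = eSup I₂ ∧
          (∀ x ∈ U₂, f₁ x = mu) ∧ (∀ y ∈ V₂, f₂ y = mu))) ∧
      (∀ u ∈ halfSum (I₁ \ (U₁ ∪ U₂)) I₂ ∪ halfSum I₁ (I₂ \ (V₁ ∪ V₂)), φ u = 0) ∧
      (I₁ \ (U₁ ∪ U₂)).Nonempty ∧ (I₁ \ (U₁ ∪ U₂)).OrdConnected ∧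
      closure (I₁ \ (U₁ ∪ U₂)) ∩ I₁ ⊆ I₁ \ (U₁ ∪ U₂) ∧ I₁ \ (U₁ ∪ U₂) ≠ I₁ ∧
      (I₂ \ (V₁ ∪ V₂)).Nonempty ∧ (I₂ \ (V₁ ∪ V₂)).OrdConnected ∧
      closure (I₂ \ (V₁ ∪ V₂)) ∩ I₂ ⊆ I₂ \ (V₁ ∪ V₂) ∧ I₂ \ (V₁ ∪ V₂) ≠ I₂ := by
  classical
  -- φ is not identically zero on D
  obtain ⟨hA, hB⟩ := not_or.mp hnotext
  push_neg at hA
  obtain ⟨u₀, hu₀D, hu₀φ⟩ := hA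
  -- D is open
  have hDopen : IsOpen (halfSum I₁ I₂) := by
    rw [Metric.isOpen_iff]
    rintro u ⟨a, ha, b, hb, rfl⟩
    obtain ⟨δ, hδ, hball⟩ := Metric.isOpen_iff.mp hI₁o a ha
    refine ⟨δ/2, by linarith, ?_⟩
    intro v hv
    rw [Metric.mem_ball, Real.dist_eq, abs_lt] at hv
    refine ⟨2*v - b, ?_, b, hb, by ring⟩
    apply hball
    rw [Metric.mem_ball, Real.dist_eq, abs_lt]
    constructor <;> linarith [hv.1, hv.2]
  -- φ is nonzero on a neighborhood of any non-vanishing point of D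
  have hNball : ∀ u ∈ halfSum I₁ I₂, φ u ≠ 0 →
      ∃ ε > 0, ∀ v, |v - u| < ε → φ v ≠ 0 ∧ v ∈ halfSum I₁ I₂ := by
    intro u hu hφ
    have hu' : u ∉ closure {w ∈ halfSum I₁ I₂ | φ w = 0} := fun h => hφ ((hZclosed ⟨h, hu⟩).2)
    obtain ⟨ε₁, hε₁, hb₁⟩ := Metric.isOpen_iff.mp isClosed_closure.isOpen_compl u hu'
    obtain ⟨ε₂, hε₂, hb₂⟩ := Metric.isOpen_iff.mp hDopen u hu
    refine ⟨min ε₁ ε₂, lt_min hε₁ hε₂, ?_⟩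
    intro v hv
    have hv₁ : v ∈ Metric.ball u ε₁ := by
      rw [Metric.mem_ball, Real.dist_eq]; exact lt_of_lt_of_le hv (min_le_left _ _)
    have hv₂ : v ∈ halfSum I₁ I₂ := hb₂ (by
      rw [Metric.mem_ball, Real.dist_eq]; exact lt_of_lt_of_le hv (min_le_right _ _))
    refine ⟨fun h0 => hb₁ hv₁ (subset_closure ⟨hv₂, h0⟩), hv₂⟩
  -- constancy of f₁ on X u and f₂ on Y u
  have hXconst : ∀ u ∈ halfSum I₁ I₂, φ u ≠ 0 → ∀ x x' : ℝ,
      (x ∈ I₁ ∧ 2*u - x ∈ I₂) → (x' ∈ I₁ ∧ 2*u - x' ∈ I₂) → f₁ x = f₁ x' := by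
    intro u hu hφ x x' hx hx'
    obtain ⟨ε, hε, hN⟩ := hNball u hu hφ
    exact aux_Xconst I₁ I₂ hI₁o hI₁c hI₂o hI₂c φ f₁ f₂ heq u ε hε
      (fun v hv => (hN v hv).1) x x' hx hx'
  have heq' : ∀ y ∈ I₂, ∀ x ∈ I₁, φ ((y + x) / 2) * (f₂ y - f₁ x) = 0 := by
    intro y hy x hx
    have h := heq x hx y hy
    rw [show (y + x)/2 = (x + y)/2 by ring]
    linear_combination -h
  have hYconst : ∀ u ∈ halfSum I₁ I₂, φ u ≠ 0 → ∀ y y' : ℝ,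
      (y ∈ I₂ ∧ 2*u - y ∈ I₁) → (y' ∈ I₂ ∧ 2*u - y' ∈ I₁) → f₂ y = f₂ y' := by
    intro u hu hφ y y' hy hy'
    obtain ⟨ε, hε, hN⟩ := hNball u hu hφ
    exact aux_Xconst I₂ I₁ hI₂o hI₂c hI₁o hI₁c φ f₂ f₁ heq' u ε hε
      (fun v hv => (hN v hv).1) y y' hy hy'
  -- the pairing identity
  have hpair : ∀ u : ℝ, φ u ≠ 0 → ∀ x ∈ I₁, 2*u - x ∈ I₂ → f₁ x = f₂ (2*u - x) := by
    intro u hφ x hx1 hx2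
    have h := heq x hx1 (2*u - x) hx2
    rw [show (x + (2*u - x))/2 = u by ring] at h
    rcases mul_eq_zero.mp h with h | h
    · exact absurd h hφ
    · linarith
  have hXY : ∀ u ∈ halfSum I₁ I₂, φ u ≠ 0 → ∀ x y : ℝ,
      (x ∈ I₁ ∧ 2*u - x ∈ I₂) → (y ∈ I₂ ∧ 2*u - y ∈ I₁) → f₁ x = f₂ y := by
    intro u hu hφ x y hx hy
    rw [hpair u hφ x hx.1 hx.2]
    exact hYconst u hu hφ _ y ⟨hx.2, by rw [show 2*u - (2*u - x) = x by ring]; exact hx.1⟩ hy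
  -- elements strictly greater/smaller inside open sets
  have hup : ∀ (S : Set ℝ), IsOpen S → ∀ a ∈ S, ∃ b ∈ S, a < b := by
    intro S hS a ha
    obtain ⟨δ, hδ, hb⟩ := Metric.isOpen_iff.mp hS a ha
    exact ⟨a + δ/2, hb (by rw [Metric.mem_ball, Real.dist_eq]; rw [abs_lt]; constructor <;> linarith),
      by linarith⟩
  have hdown : ∀ (S : Set ℝ), IsOpen S → ∀ a ∈ S, ∃ b ∈ S, b < a := by
    intro S hS a ha
    obtain ⟨δ, hδ, hb⟩ := Metric.isOpen_iff.mp hS a ha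
    exact ⟨a - δ/2, hb (by rw [Metric.mem_ball, Real.dist_eq]; rw [abs_lt]; constructor <;> linarith),
      by linarith⟩
  -- the two sets of good points
  set Nm : Set ℝ := {u | u ∈ halfSum I₁ I₂ ∧ φ u ≠ 0 ∧
      (∀ x ∈ I₁, ∃ y ∈ I₂, 2*u - x < y) ∧ (∀ y ∈ I₂, ∃ x ∈ I₁, 2*u - y < x)} with hNm_def
  set Np : Set ℝ := {u | u ∈ halfSum I₁ I₂ ∧ φ u ≠ 0 ∧
      (∀ x ∈ I₁, ∃ y ∈ I₂, y < 2*u - x) ∧ (∀ y ∈ I₂, ∃ x ∈ I₁, x < 2*u - y)} with hNp_def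
  -- dichotomy
  have hdich : ∀ u ∈ halfSum I₁ I₂, φ u ≠ 0 → u ∈ Nm ∨ u ∈ Np := by
    intro u hu hφ
    by_cases hq1 : ∀ x ∈ I₁, ∃ y ∈ I₂, y < 2*u - x
    · by_cases hq2 : ∀ y ∈ I₂, ∃ x ∈ I₁, x < 2*u - y
      · exact Or.inr ⟨hu, hφ, hq1, hq2⟩
      · push_neg at hq2
        obtain ⟨y₁, hy₁, hy₁'⟩ := hq2
        have hp1 : ∀ x ∈ I₁, ∃ y ∈ I₂, 2*u - x < y := by
          intro x hx
          obtain ⟨y', hy', hlt⟩ := hup I₂ hI₂o y₁ hy₁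
          exact ⟨y', hy', by have := hy₁' x hx; linarith⟩
        by_cases hp2 : ∀ y ∈ I₂, ∃ x ∈ I₁, 2*u - y < x
        · exact Or.inl ⟨hu, hφ, hp1, hp2⟩
        · push_neg at hp2
          obtain ⟨y₀, hy₀, hy₀'⟩ := hp2
          exfalso
          apply hf₁nc
          obtain ⟨x₀, hx₀⟩ := hI₁n
          refine ⟨f₁ x₀, fun x hx => ?_⟩
          have hm : ∀ z ∈ I₁, 2*u - z ∈ I₂ := by
            intro z hz
            exact hI₂c.out hy₀ hy₁ ⟨by linarith [hy₀' z hz], by linarith [hy₁' z hz]⟩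
          exact hXconst u hu hφ x x₀ ⟨hx, hm x hx⟩ ⟨hx₀, hm x₀ hx₀⟩
    · push_neg at hq1
      obtain ⟨x₁, hx₁, hx₁'⟩ := hq1
      have hp2 : ∀ y ∈ I₂, ∃ x ∈ I₁, 2*u - y < x := by
        intro y hy
        obtain ⟨x', hx', hlt⟩ := hup I₁ hI₁o x₁ hx₁
        exact ⟨x', hx', by have := hx₁' y hy; linarith⟩
      by_cases hp1 : ∀ x ∈ I₁, ∃ y ∈ I₂, 2*u - x < y
      · exact Or.inl ⟨hu, hφ, hp1, hp2⟩
      · push_neg at hp1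
        obtain ⟨x₀, hx₀, hx₀'⟩ := hp1
        exfalso
        apply hf₂nc
        obtain ⟨y₀, hy₀⟩ := hI₂n
        refine ⟨f₂ y₀, fun y hy => ?_⟩
        have hm : ∀ z ∈ I₂, 2*u - z ∈ I₁ := by
          intro z hz
          exact hI₁c.out hx₀ hx₁ ⟨by linarith [hx₀' z hz], by linarith [hx₁' z hz]⟩
        exact hYconst u hu hφ y y₀ ⟨hy, hm y hy⟩ ⟨hy₀, hm y₀ hy₀⟩
  -- absorption lemmas
  have habsLX : ∀ u ∈ Nm, ∀ x', (x' ∈ I₁ ∧ 2*u - x' ∈ I₂) → ∀ z ∈ I₁, z ≤ x' →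
      (z ∈ I₁ ∧ 2*u - z ∈ I₂) := by
    rintro u ⟨_, _, hP₁, _⟩ x' hx' z hz hle
    obtain ⟨y, hy, hlt⟩ := hP₁ z hz
    exact ⟨hz, hI₂c.out hx'.2 hy ⟨by linarith, le_of_lt hlt⟩⟩
  have habsLY : ∀ u ∈ Nm, ∀ y', (y' ∈ I₂ ∧ 2*u - y' ∈ I₁) → ∀ z ∈ I₂, z ≤ y' →
      (z ∈ I₂ ∧ 2*u - z ∈ I₁) := by
    rintro u ⟨_, _, _, hP₂⟩ y' hy' z hz hle
    obtain ⟨x, hx, hlt⟩ := hP₂ z hz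
    exact ⟨hz, hI₁c.out hy'.2 hx ⟨by linarith, le_of_lt hlt⟩⟩
  have habsRX : ∀ u ∈ Np, ∀ x', (x' ∈ I₁ ∧ 2*u - x' ∈ I₂) → ∀ z ∈ I₁, x' ≤ z →
      (z ∈ I₁ ∧ 2*u - z ∈ I₂) := by
    rintro u ⟨_, _, hQ₁, _⟩ x' hx' z hz hle
    obtain ⟨y, hy, hlt⟩ := hQ₁ z hz
    exact ⟨hz, hI₂c.out hy hx'.2 ⟨le_of_lt hlt, by linarith⟩⟩
  have habsRY : ∀ u ∈ Np, ∀ y', (y' ∈ I₂ ∧ 2*u - y' ∈ I₁) → ∀ z ∈ I₂, y' ≤ z →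
      (z ∈ I₂ ∧ 2*u - z ∈ I₁) := by
    rintro u ⟨_, _, _, hQ₂⟩ y' hy' z hz hle
    obtain ⟨x, hx, hlt⟩ := hQ₂ z hz
    exact ⟨hz, hI₁c.out hx hy'.2 ⟨le_of_lt hlt, by linarith⟩⟩
  -- the four sets
  set U₁ : Set ℝ := {x | ∃ u ∈ Nm, x ∈ I₁ ∧ 2*u - x ∈ I₂} with hU₁_def
  set V₁ : Set ℝ := {y | ∃ u ∈ Nm, y ∈ I₂ ∧ 2*u - y ∈ I₁} with hV₁_def
  set U₂ : Set ℝ := {x | ∃ u ∈ Np, x ∈ I₁ ∧ 2*u - x ∈ I₂} with hU₂_def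
  set V₂ : Set ℝ := {y | ∃ u ∈ Np, y ∈ I₂ ∧ 2*u - y ∈ I₁} with hV₂_def
  have hU₁I : U₁ ⊆ I₁ := by rintro x ⟨u, hu, hx⟩; exact hx.1
  have hU₂I : U₂ ⊆ I₁ := by rintro x ⟨u, hu, hx⟩; exact hx.1
  have hV₁I : V₁ ⊆ I₂ := by rintro y ⟨u, hu, hy⟩; exact hy.1
  have hV₂I : V₂ ⊆ I₂ := by rintro y ⟨u, hu, hy⟩; exact hy.1
  -- openness
  have hXopen : ∀ u : ℝ, IsOpen {x : ℝ | x ∈ I₁ ∧ 2*u - x ∈ I₂} := by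
    intro u
    have : {x : ℝ | x ∈ I₁ ∧ 2*u - x ∈ I₂} = I₁ ∩ (fun z : ℝ => 2*u - z) ⁻¹' I₂ := rfl
    rw [this]
    exact hI₁o.inter (hI₂o.preimage (continuous_const.sub continuous_id))
  have hYopen : ∀ u : ℝ, IsOpen {y : ℝ | y ∈ I₂ ∧ 2*u - y ∈ I₁} := by
    intro u
    have : {y : ℝ | y ∈ I₂ ∧ 2*u - y ∈ I₁} = I₂ ∩ (fun z : ℝ => 2*u - z) ⁻¹' I₁ := rfl
    rw [this]
    exact hI₂o.inter (hI₁o.preimage (continuous_const.sub continuous_id))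
  have hU₁o : IsOpen U₁ := isOpen_exists_mem (fun u => {z : ℝ | z ∈ I₁ ∧ 2*u - z ∈ I₂})
    (fun u => hXopen u)
  have hU₂o : IsOpen U₂ := isOpen_exists_mem (fun u => {z : ℝ | z ∈ I₁ ∧ 2*u - z ∈ I₂})
    (fun u => hXopen u)
  have hV₁o : IsOpen V₁ := isOpen_exists_mem (fun u => {z : ℝ | z ∈ I₂ ∧ 2*u - z ∈ I₁})
    (fun u => hYopen u)
  have hV₂o : IsOpen V₂ := isOpen_exists_mem (fun u => {z : ℝ | z ∈ I₂ ∧ 2*u - z ∈ I₁})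
    (fun u => hYopen u)
  -- ord-connectedness
  have hU₁ord : U₁.OrdConnected := by
    constructor
    rintro a ⟨u, hu, ha⟩ b ⟨u', hu', hb⟩ z hz
    rw [Set.mem_Icc] at hz
    exact ⟨u', hu', habsLX u' hu' b hb z (hI₁c.out ha.1 hb.1 (Set.mem_Icc.mpr hz)) hz.2⟩
  have hU₂ord : U₂.OrdConnected := by
    constructor
    rintro a ⟨u, hu, ha⟩ b ⟨u', hu', hb⟩ z hz
    rw [Set.mem_Icc] at hz
    exact ⟨u, hu, habsRX u hu a ha z (hI₁c.out ha.1 hb.1 (Set.mem_Icc.mpr hz)) hz.1⟩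
  have hV₁ord : V₁.OrdConnected := by
    constructor
    rintro a ⟨u, hu, ha⟩ b ⟨u', hu', hb⟩ z hz
    rw [Set.mem_Icc] at hz
    exact ⟨u', hu', habsLY u' hu' b hb z (hI₂c.out ha.1 hb.1 (Set.mem_Icc.mpr hz)) hz.2⟩
  have hV₂ord : V₂.OrdConnected := by
    constructor
    rintro a ⟨u, hu, ha⟩ b ⟨u', hu', hb⟩ z hz
    rw [Set.mem_Icc] at hz
    exact ⟨u, hu, habsRY u hu a ha z (hI₂c.out ha.1 hb.1 (Set.mem_Icc.mpr hz)) hz.1⟩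
  -- constancy on the four sets
  have hU₁c : ∀ x ∈ U₁, ∀ x' ∈ U₁, f₁ x = f₁ x' := by
    rintro x ⟨u, hu, hx⟩ x' ⟨u', hu', hx'⟩
    rcases le_total x x' with h | h
    · exact hXconst u' hu'.1 hu'.2.1 x x' (habsLX u' hu' x' hx' x hx.1 h) hx'
    · exact hXconst u hu.1 hu.2.1 x x' hx (habsLX u hu x hx x' hx'.1 h)
  have hU₂c : ∀ x ∈ U₂, ∀ x' ∈ U₂, f₁ x = f₁ x' := by
    rintro x ⟨u, hu, hx⟩ x' ⟨u', hu', hx'⟩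
    rcases le_total x x' with h | h
    · exact hXconst u hu.1 hu.2.1 x x' hx (habsRX u hu x hx x' hx'.1 h)
    · exact hXconst u' hu'.1 hu'.2.1 x x' (habsRX u' hu' x' hx' x hx.1 h) hx'
  have hV₁c : ∀ y ∈ V₁, ∀ y' ∈ V₁, f₂ y = f₂ y' := by
    rintro y ⟨u, hu, hy⟩ y' ⟨u', hu', hy'⟩
    rcases le_total y y' with h | h
    · exact hYconst u' hu'.1 hu'.2.1 y y' (habsLY u' hu' y' hy' y hy.1 h) hy'
    · exact hYconst u hu.1 hu.2.1 y y' hy (habsLY u hu y hy y' hy'.1 h)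
  have hV₂c : ∀ y ∈ V₂, ∀ y' ∈ V₂, f₂ y = f₂ y' := by
    rintro y ⟨u, hu, hy⟩ y' ⟨u', hu', hy'⟩
    rcases le_total y y' with h | h
    · exact hYconst u hu.1 hu.2.1 y y' hy (habsRY u hu y hy y' hy'.1 h)
    · exact hYconst u' hu'.1 hu'.2.1 y y' (habsRY u' hu' y' hy' y hy.1 h) hy'
  -- K-set properties
  have hK₁ord : (I₁ \ (U₁ ∪ U₂)).OrdConnected := by
    constructor
    rintro a ⟨haI, haU⟩ b ⟨hbI, hbU⟩ z hz
    rw [Set.mem_Icc] at hz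
    have hzI : z ∈ I₁ := hI₁c.out haI hbI (Set.mem_Icc.mpr hz)
    refine ⟨hzI, ?_⟩
    rintro (⟨u, hu, hzX⟩ | ⟨u, hu, hzX⟩)
    · exact haU (Or.inl ⟨u, hu, habsLX u hu z hzX a haI hz.1⟩)
    · exact hbU (Or.inr ⟨u, hu, habsRX u hu z hzX b hbI hz.2⟩)
  have hK₂ord : (I₂ \ (V₁ ∪ V₂)).OrdConnected := by
    constructor
    rintro a ⟨haI, haU⟩ b ⟨hbI, hbU⟩ z hz
    rw [Set.mem_Icc] at hz
    have hzI : z ∈ I₂ := hI₂c.out haI hbI (Set.mem_Icc.mpr hz)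
    refine ⟨hzI, ?_⟩
    rintro (⟨u, hu, hzY⟩ | ⟨u, hu, hzY⟩)
    · exact haU (Or.inl ⟨u, hu, habsLY u hu z hzY a haI hz.1⟩)
    · exact hbU (Or.inr ⟨u, hu, habsRY u hu z hzY b hbI hz.2⟩)
  have hclosedK : ∀ (S O : Set ℝ), IsOpen O → closure (S \ O) ∩ S ⊆ S \ O := by
    rintro S O hO z ⟨hzc, hzS⟩
    refine ⟨hzS, fun hzO => ?_⟩
    obtain ⟨δ, hδ, hball⟩ := Metric.isOpen_iff.mp hO z hzO
    rw [Metric.mem_closure_iff] at hzc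
    obtain ⟨w, hwK, hwd⟩ := hzc δ hδ
    exact hwK.2 (hball (Metric.mem_ball.mpr (by rwa [dist_comm])))
  have hK₁cl : closure (I₁ \ (U₁ ∪ U₂)) ∩ I₁ ⊆ I₁ \ (U₁ ∪ U₂) :=
    hclosedK I₁ _ (hU₁o.union hU₂o)
  have hK₂cl : closure (I₂ \ (V₁ ∪ V₂)) ∩ I₂ ⊆ I₂ \ (V₁ ∪ V₂) :=
    hclosedK I₂ _ (hV₁o.union hV₂o)
  -- K-sets are nonempty
  have hK₁ne : (I₁ \ (U₁ ∪ U₂)).Nonempty := by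
    rw [Set.nonempty_iff_ne_empty]
    intro hemp
    have hcov : I₁ ⊆ U₁ ∪ U₂ := Set.diff_eq_empty.mp hemp
    apply hf₁nc
    by_cases hU₁n : U₁.Nonempty
    · by_cases hU₂n : U₂.Nonempty
      · obtain ⟨x₁, hx₁⟩ := hU₁n
        obtain ⟨x₂, hx₂⟩ := hU₂n
        obtain ⟨z, hzI, hzU₁, hzU₂⟩ := hI₁c.isPreconnected U₁ U₂ hU₁o hU₂o hcov
          ⟨x₁, hU₁I hx₁, hx₁⟩ ⟨x₂, hU₂I hx₂, hx₂⟩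
        refine ⟨f₁ z, fun x hx => ?_⟩
        rcases hcov hx with h | h
        · exact hU₁c x h z hzU₁
        · exact hU₂c x h z hzU₂
      · rw [Set.not_nonempty_iff_eq_empty] at hU₂n
        obtain ⟨x₀, hx₀⟩ := hI₁n
        have hmem : ∀ x ∈ I₁, x ∈ U₁ := by
          intro x hx
          rcases hcov hx with h | h
          · exact h
          · rw [hU₂n] at h; exact absurd h (Set.notMem_empty x)
        exact ⟨f₁ x₀, fun x hx => hU₁c x (hmem x hx) x₀ (hmem x₀ hx₀)⟩
    · rw [Set.not_nonempty_iff_eq_empty] at hU₁n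
      obtain ⟨x₀, hx₀⟩ := hI₁n
      have hmem : ∀ x ∈ I₁, x ∈ U₂ := by
        intro x hx
        rcases hcov hx with h | h
        · rw [hU₁n] at h; exact absurd h (Set.notMem_empty x)
        · exact h
      exact ⟨f₁ x₀, fun x hx => hU₂c x (hmem x hx) x₀ (hmem x₀ hx₀)⟩
  have hK₂ne : (I₂ \ (V₁ ∪ V₂)).Nonempty := by
    rw [Set.nonempty_iff_ne_empty]
    intro hemp
    have hcov : I₂ ⊆ V₁ ∪ V₂ := Set.diff_eq_empty.mp hemp
    apply hf₂nc
    by_cases hV₁n : V₁.Nonempty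
    · by_cases hV₂n : V₂.Nonempty
      · obtain ⟨y₁, hy₁⟩ := hV₁n
        obtain ⟨y₂, hy₂⟩ := hV₂n
        obtain ⟨z, hzI, hzV₁, hzV₂⟩ := hI₂c.isPreconnected V₁ V₂ hV₁o hV₂o hcov
          ⟨y₁, hV₁I hy₁, hy₁⟩ ⟨y₂, hV₂I hy₂, hy₂⟩
        refine ⟨f₂ z, fun y hy => ?_⟩
        rcases hcov hy with h | h
        · exact hV₁c y h z hzV₁
        · exact hV₂c y h z hzV₂
      · rw [Set.not_nonempty_iff_eq_empty] at hV₂n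
        obtain ⟨y₀, hy₀⟩ := hI₂n
        have hmem : ∀ y ∈ I₂, y ∈ V₁ := by
          intro y hy
          rcases hcov hy with h | h
          · exact h
          · rw [hV₂n] at h; exact absurd h (Set.notMem_empty y)
        exact ⟨f₂ y₀, fun y hy => hV₁c y (hmem y hy) y₀ (hmem y₀ hy₀)⟩
    · rw [Set.not_nonempty_iff_eq_empty] at hV₁n
      obtain ⟨y₀, hy₀⟩ := hI₂n
      have hmem : ∀ y ∈ I₂, y ∈ V₂ := by
        intro y hy
        rcases hcov hy with h | h
        · rw [hV₁n] at h; exact absurd h (Set.notMem_empty y)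
        · exact h
      exact ⟨f₂ y₀, fun y hy => hV₂c y (hmem y hy) y₀ (hmem y₀ hy₀)⟩
  -- K-sets are proper
  obtain ⟨a₀, ha₀, b₀, hb₀, hab₀⟩ := hu₀D
  have ha₀X : a₀ ∈ I₁ ∧ 2*u₀ - a₀ ∈ I₂ :=
    ⟨ha₀, by rw [hab₀, show 2*((a₀+b₀)/2) - a₀ = b₀ by ring]; exact hb₀⟩
  have hb₀Y : b₀ ∈ I₂ ∧ 2*u₀ - b₀ ∈ I₁ :=
    ⟨hb₀, by rw [hab₀, show 2*((a₀+b₀)/2) - b₀ = a₀ by ring]; exact ha₀⟩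
  have hu₀D' : u₀ ∈ halfSum I₁ I₂ := ⟨a₀, ha₀, b₀, hb₀, hab₀⟩
  have hK₁neq : I₁ \ (U₁ ∪ U₂) ≠ I₁ := by
    intro h
    have hmem : a₀ ∈ I₁ \ (U₁ ∪ U₂) := by rw [h]; exact ha₀
    rcases hdich u₀ hu₀D' hu₀φ with hh | hh
    · exact hmem.2 (Or.inl ⟨u₀, hh, ha₀X⟩)
    · exact hmem.2 (Or.inr ⟨u₀, hh, ha₀X⟩)
  have hK₂neq : I₂ \ (V₁ ∪ V₂) ≠ I₂ := by
    intro h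
    have hmem : b₀ ∈ I₂ \ (V₁ ∪ V₂) := by rw [h]; exact hb₀
    rcases hdich u₀ hu₀D' hu₀φ with hh | hh
    · exact hmem.2 (Or.inl ⟨u₀, hh, hb₀Y⟩)
    · exact hmem.2 (Or.inr ⟨u₀, hh, hb₀Y⟩)
  -- vanishing of φ
  have hvanish : ∀ u ∈ halfSum (I₁ \ (U₁ ∪ U₂)) I₂ ∪ halfSum I₁ (I₂ \ (V₁ ∪ V₂)),
      φ u = 0 := by
    rintro u (⟨a, ⟨haI, haU⟩, b, hb, rfl⟩ | ⟨a, haI, b, ⟨hbI, hbU⟩, rfl⟩)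
    · by_contra hφ
      have huD : (a+b)/2 ∈ halfSum I₁ I₂ := ⟨a, haI, b, hb, rfl⟩
      have haX : a ∈ I₁ ∧ 2*((a+b)/2) - a ∈ I₂ :=
        ⟨haI, by rw [show 2*((a+b)/2) - a = b by ring]; exact hb⟩
      rcases hdich _ huD hφ with h | h
      · exact haU (Or.inl ⟨_, h, haX⟩)
      · exact haU (Or.inr ⟨_, h, haX⟩)
    · by_contra hφ
      have huD : (a+b)/2 ∈ halfSum I₁ I₂ := ⟨a, haI, b, hbI, rfl⟩
      have hbY : b ∈ I₂ ∧ 2*((a+b)/2) - b ∈ I₁ :=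
        ⟨hbI, by rw [show 2*((a+b)/2) - b = a by ring]; exact haI⟩
      rcases hdich _ huD hφ with h | h
      · exact hbU (Or.inl ⟨_, h, hbY⟩)
      · exact hbU (Or.inr ⟨_, h, hbY⟩)
  -- main case split
  by_cases hNmn : Nm.Nonempty
  · obtain ⟨u0, hu0⟩ := hNmn
    obtain ⟨a, ha, b, hb, hab⟩ := hu0.1
    have haX : a ∈ I₁ ∧ 2*u0 - a ∈ I₂ :=
      ⟨ha, by rw [hab, show 2*((a+b)/2) - a = b by ring]; exact hb⟩
    have hbY : b ∈ I₂ ∧ 2*u0 - b ∈ I₁ :=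
      ⟨hb, by rw [hab, show 2*((a+b)/2) - b = a by ring]; exact ha⟩
    have haU : a ∈ U₁ := ⟨u0, hu0, haX⟩
    have hbV : b ∈ V₁ := ⟨u0, hu0, hbY⟩
    refine ⟨f₁ a, 0, U₁, U₂, V₁, V₂, hU₁o, hU₁ord, hU₁I, hU₂o, hU₂ord, hU₂I,
      hV₁o, hV₁ord, hV₁I, hV₂o, hV₂ord, hV₂I, Or.inl ⟨?_, ?_, ?_, ?_⟩,
      hvanish, hK₁ne, hK₁ord, hK₁cl, hK₁neq, hK₂ne, hK₂ord, hK₂cl, hK₂neq⟩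
    · exact eInf_eq_of hU₁I (fun x hx => ⟨min x a, ⟨u0, hu0, habsLX u0 hu0 a haX (min x a)
        (by rcases le_total x a with h | h
            · rwa [min_eq_left h]
            · rwa [min_eq_right h]) (min_le_right x a)⟩, min_le_left x a⟩)
    · exact eInf_eq_of hV₁I (fun y hy => ⟨min y b, ⟨u0, hu0, habsLY u0 hu0 b hbY (min y b)
        (by rcases le_total y b with h | h
            · rwa [min_eq_left h]
            · rwa [min_eq_right h]) (min_le_right y b)⟩, min_le_left y b⟩)
    · exact fun x hx => hU₁c x hx a haU
    · intro y hy
      rw [hV₁c y hy b hbV]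
      exact (hXY u0 hu0.1 hu0.2.1 a b haX hbY).symm
  · have hNpn : ∃ u, u ∈ Np := by
      rcases hdich u₀ hu₀D' hu₀φ with h | h
      · exact absurd ⟨u₀, h⟩ hNmn
      · exact ⟨u₀, h⟩
    obtain ⟨u0, hu0⟩ := hNpn
    obtain ⟨a, ha, b, hb, hab⟩ := hu0.1
    have haX : a ∈ I₁ ∧ 2*u0 - a ∈ I₂ :=
      ⟨ha, by rw [hab, show 2*((a+b)/2) - a = b by ring]; exact hb⟩
    have hbY : b ∈ I₂ ∧ 2*u0 - b ∈ I₁ :=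
      ⟨hb, by rw [hab, show 2*((a+b)/2) - b = a by ring]; exact ha⟩
    have haU : a ∈ U₂ := ⟨u0, hu0, haX⟩
    have hbV : b ∈ V₂ := ⟨u0, hu0, hbY⟩
    refine ⟨0, f₁ a, U₁, U₂, V₁, V₂, hU₁o, hU₁ord, hU₁I, hU₂o, hU₂ord, hU₂I,
      hV₁o, hV₁ord, hV₁I, hV₂o, hV₂ord, hV₂I, Or.inr ⟨?_, ?_, ?_, ?_⟩,
      hvanish, hK₁ne, hK₁ord, hK₁cl, hK₁neq, hK₂ne, hK₂ord, hK₂cl, hK₂neq⟩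
    · exact eSup_eq_of hU₂I (fun x hx => ⟨max x a, ⟨u0, hu0, habsRX u0 hu0 a haX (max x a)
        (by rcases le_total x a with h | h
            · rwa [max_eq_right h]
            · rwa [max_eq_left h]) (le_max_right x a)⟩, le_max_left x a⟩)
    · exact eSup_eq_of hV₂I (fun y hy => ⟨max y b, ⟨u0, hu0, habsRY u0 hu0 b hbY (max y b)
        (by rcases le_total y b with h | h
            · rwa [max_eq_right h]
            · rwa [max_eq_left h]) (le_max_right y b)⟩, le_max_left y b⟩)
    · exact fun x hx => hU₂c x hx a haU
    · intro y hy
      rw [hV₂c y hy b hbV]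
      exact (hXY u0 hu0.1 hu0.2.1 a b haX hbY).symm
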